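/- Let G be a compact connected Lie group with bi-invariant metric, acting on itself-squared diagonally as in the isometry (√2G × √2G)/G ≅ G. Iterating this m times produces an isometric identification of G with the quotient of (2^{m/2}·G)^{2^m} by an isometric action of a compact group; consequently, the composition of the corresponding Wasserstein lifting maps ℒ_m ∘ ⋯ ∘ ℒ₁ : 𝒫₂(G) → 𝒫₂((2^{m/2}·G)^{2^m}) is a distance-preserving map whose composition with the pushforward of the iterated projection is the identity on 𝒫₂(G). -/

import Mathlib

open MeasureTheory ENNReal Finset

/-- `q` is a coupling of `μ` and `ν`. -/
def IsCoupling {X : Type*} [MeasurableSpace X]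
    (q : Measure (X × X)) (mu nu : Measure X) : Prop :=
  q.map Prod.fst = mu ∧ q.map Prod.snd = nu

/-- The squared 2-Wasserstein "distance" for an arbitrary cost function `c` (the squared
distance of the relevant metric): `inf` over couplings of `∫ c dq`. -/
noncomputable def WassCost {X : Type*} [MeasurableSpace X]
    (c : X × X → ℝ≥0∞) (mu nu : Measure X) : ℝ≥0∞ :=
  ⨅ (q : Measure (X × X)) (_ : IsCoupling q mu nu), ∫⁻ p, c p ∂q

/-- The distance of the scaled ℓ² power `(2^{m/2}·G)^{2^m}`. -/
noncomputable def towerDist {G : Type*} [MetricSpace G] (m : ℕ)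
    (x y : Fin (2 ^ m) → G) : ℝ :=
  (2 : ℝ) ^ ((m : ℝ) / 2) * Real.sqrt (∑ i, dist (x i) (y i) ^ 2)

/-- The squared-distance cost of the scaled ℓ² power `(2^{m/2}·G)^{2^m}`. -/
noncomputable def towerCost {G : Type*} [PseudoEMetricSpace G] (m : ℕ)
    (q : (Fin (2 ^ m) → G) × (Fin (2 ^ m) → G)) : ℝ≥0∞ :=
  (2 : ℝ≥0∞) ^ m * ∑ i, edist (q.1 i) (q.2 i) ^ 2

set_option linter.unusedSectionVars false

section Aux

variable {G : Type*} [Group G] [MetricSpace G]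

lemma two_pow_succ (m : ℕ) : 2 ^ (m + 1) = 2 ^ m + 2 ^ m := by
  rw [pow_succ, mul_two]

/-- first half -/
def split1 {m : ℕ} (x : Fin (2 ^ (m + 1)) → G) : Fin (2 ^ m) → G :=
  fun i => x ⟨i.1, by have := i.2; omega⟩

/-- second half -/
def split2 {m : ℕ} (x : Fin (2 ^ (m + 1)) → G) : Fin (2 ^ m) → G :=
  fun i => x ⟨2 ^ m + i.1, by have := i.2; have := two_pow_succ m; omega⟩

/-- merge halves -/
def tmerge {m : ℕ} (y z : Fin (2 ^ m) → G) : Fin (2 ^ (m + 1)) → G :=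
  fun j => if h : (j : ℕ) < 2 ^ m then y ⟨j, h⟩
    else z ⟨(j : ℕ) - 2 ^ m, by have := j.2; have := two_pow_succ m; omega⟩

@[simp] lemma split1_tmerge {m : ℕ} (y z : Fin (2 ^ m) → G) : split1 (tmerge y z) = y := by
  funext i
  simp only [split1, tmerge, i.2, dif_pos]

@[simp] lemma split2_tmerge {m : ℕ} (y z : Fin (2 ^ m) → G) : split2 (tmerge y z) = z := by
  funext i
  have h : ¬ (2 ^ m + i.1 < 2 ^ m) := by omega
  simp only [split2, tmerge, h, dif_neg, not_false_iff]
  congr 1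
  ext
  simp

lemma sum_split {M : Type*} [AddCommMonoid M] {m : ℕ} (f : Fin (2 ^ (m + 1)) → M) :
    ∑ j, f j = (∑ i : Fin (2 ^ m), f ⟨i.1, by have := i.2; omega⟩)
      + ∑ i : Fin (2 ^ m), f ⟨2 ^ m + i.1, by have := i.2; have := two_pow_succ m; omega⟩ := by
  have h : 2 ^ (m + 1) = 2 ^ m + 2 ^ m := two_pow_succ m
  rw [← Fintype.sum_equiv (finCongr h.symm) (fun j : Fin (2 ^ m + 2 ^ m) => f (finCongr h.symm j))
    f (fun j => rfl)]
  rw [Fin.sum_univ_add]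
  congr 1


variable [IsIsometricSMul G G] [IsIsometricSMul Gᵐᵒᵖ G]

instance (priority := 100) biinvariant_topGroup : IsTopologicalGroup G where
  continuous_mul := by
    rw [Metric.continuous_iff]
    intro p ε hε
    refine ⟨ε / 2, by linarith, fun q hq => ?_⟩
    rw [Prod.dist_eq] at hq
    have h1 : dist q.1 p.1 < ε / 2 := lt_of_le_of_lt (le_max_left _ _) hq
    have h2 : dist q.2 p.2 < ε / 2 := lt_of_le_of_lt (le_max_right _ _) hq
    calc dist (q.1 * q.2) (p.1 * p.2)
        ≤ dist (q.1 * q.2) (q.1 * p.2) + dist (q.1 * p.2) (p.1 * p.2) := dist_triangle _ _ _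
    _ = dist q.2 p.2 + dist q.1 p.1 := by rw [dist_mul_left, dist_mul_right]
    _ < ε := by linarith
  continuous_inv := by
    rw [Metric.continuous_iff]
    intro p ε hε
    refine ⟨ε, hε, fun q hq => ?_⟩
    rwa [dist_inv_inv]

lemma towerDist_eq_sqrt {m : ℕ} (x y : Fin (2 ^ m) → G) :
    towerDist m x y = Real.sqrt ((2 ^ m : ℝ) * ∑ i, dist (x i) (y i) ^ 2) := by
  rw [towerDist, Real.sqrt_mul (by positivity)]
  congr 1
  rw [← Real.rpow_natCast (2 : ℝ) m, Real.sqrt_eq_rpow, ← Real.rpow_mul (by norm_num),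
    mul_one_div]

lemma towerDist_nonneg {m : ℕ} (x y : Fin (2 ^ m) → G) : 0 ≤ towerDist m x y := by
  rw [towerDist_eq_sqrt]; exact Real.sqrt_nonneg _

lemma towerDist_sq {m : ℕ} (x y : Fin (2 ^ m) → G) :
    (towerDist m x y) ^ 2 = (2 ^ m : ℝ) * ∑ i, dist (x i) (y i) ^ 2 := by
  rw [towerDist_eq_sqrt, Real.sq_sqrt]
  positivity

lemma towerDist_zero (x y : Fin (2 ^ 0) → G) : towerDist 0 x y = dist (x 0) (y 0) := by
  rw [towerDist_eq_sqrt]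
  simp [Real.sqrt_sq_eq_abs]

lemma towerDist_succ {m : ℕ} (x y : Fin (2 ^ (m + 1)) → G) :
    towerDist (m + 1) x y =
      Real.sqrt (2 * ((towerDist m (split1 x) (split1 y)) ^ 2
        + (towerDist m (split2 x) (split2 y)) ^ 2)) := by
  rw [towerDist_eq_sqrt, towerDist_sq, towerDist_sq]
  congr 1
  rw [sum_split (fun j => dist (x j) (y j) ^ 2)]
  simp only [split1, split2]
  ring

lemma sqrt_two_helper_le {A B C : ℝ} (hA : 0 ≤ A) (hB : 0 ≤ B) (h1 : A ≤ C) (h2 : B ≤ C) :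
    Real.sqrt (2 * (A ^ 2 + B ^ 2)) ≤ 2 * C := by
  have hC : 0 ≤ C := le_trans hA h1
  have : 2 * (A ^ 2 + B ^ 2) ≤ (2 * C) ^ 2 := by nlinarith
  calc Real.sqrt (2 * (A ^ 2 + B ^ 2)) ≤ Real.sqrt ((2 * C) ^ 2) := Real.sqrt_le_sqrt this
  _ = 2 * C := by rw [Real.sqrt_sq (by positivity)]

lemma sqrt_two_helper_eq {C : ℝ} (hC : 0 ≤ C) :
    Real.sqrt (2 * ((C / 2) ^ 2 + (C / 2) ^ 2)) = C := by
  have : 2 * ((C / 2) ^ 2 + (C / 2) ^ 2) = C ^ 2 := by ring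
  rw [this, Real.sqrt_sq hC]

lemma add_le_sqrt_two {A B : ℝ} (hA : 0 ≤ A) (hB : 0 ≤ B) :
    A + B ≤ Real.sqrt (2 * (A ^ 2 + B ^ 2)) := by
  rw [show (2 : ℝ) * (A ^ 2 + B ^ 2) = (A + B) ^ 2 + (A - B) ^ 2 by ring]
  calc A + B = Real.sqrt ((A + B) ^ 2) := (Real.sqrt_sq (by positivity)).symm
  _ ≤ _ := Real.sqrt_le_sqrt (by nlinarith)

lemma towerCost_eq {m : ℕ} (x y : Fin (2 ^ m) → G) :
    towerCost m (x, y) = ENNReal.ofReal ((towerDist m x y) ^ 2) := by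
  rw [towerDist_sq, towerCost, ENNReal.ofReal_mul (by positivity),
    ENNReal.ofReal_sum_of_nonneg (fun i _ => by positivity)]
  congr 1
  · simp [ENNReal.ofReal_pow, ENNReal.ofReal_ofNat]
  · exact Finset.sum_congr rfl fun i _ => by
      rw [ENNReal.ofReal_pow dist_nonneg, edist_dist]


/-- two-sided translation action on a power -/
def sAct {n : ℕ} (k : (Fin n → G) × (Fin n → G)) (x : Fin n → G) : Fin n → G :=
  fun i => k.1 i * x i * (k.2 i)⁻¹

@[simp] lemma sAct_one {n : ℕ} (x : Fin n → G) : sAct 1 x = x := by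
  funext i; simp [sAct]

lemma sAct_mul {n : ℕ} (k k' : (Fin n → G) × (Fin n → G)) (x : Fin n → G) :
    sAct (k * k') x = sAct k (sAct k' x) := by
  funext i
  simp only [sAct, Prod.fst_mul, Prod.snd_mul, Pi.mul_apply, mul_inv_rev]
  group

lemma towerDist_sAct {m : ℕ} (k : (Fin (2 ^ m) → G) × (Fin (2 ^ m) → G))
    (x y : Fin (2 ^ m) → G) : towerDist m (sAct k x) (sAct k y) = towerDist m x y := by
  rw [towerDist_eq_sqrt, towerDist_eq_sqrt]
  congr 2
  refine Finset.sum_congr rfl fun i _ => ?_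
  simp only [sAct]
  rw [dist_mul_right, dist_mul_left]

lemma continuous_sAct [TopologicalSpace G] [IsTopologicalGroup G] {n : ℕ} :
    Continuous (fun p : (((Fin n → G) × (Fin n → G)) × (Fin n → G)) => sAct p.1 p.2) := by
  refine continuous_pi fun i => ?_
  have h1 : Continuous fun p : (((Fin n → G) × (Fin n → G)) × (Fin n → G)) => p.1.1 i :=
    (continuous_apply i).comp (continuous_fst.comp continuous_fst)
  have h2 : Continuous fun p : (((Fin n → G) × (Fin n → G)) × (Fin n → G)) => p.2 i :=
    (continuous_apply i).comp continuous_snd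
  have h3 : Continuous fun p : (((Fin n → G) × (Fin n → G)) × (Fin n → G)) => p.1.2 i :=
    (continuous_apply i).comp (continuous_snd.comp continuous_fst)
  exact (h1.mul h2).mul h3.inv

/-- merge two translation parameters -/
def kmerge {m : ℕ} (k k' : (Fin (2 ^ m) → G) × (Fin (2 ^ m) → G)) :
    (Fin (2 ^ (m + 1)) → G) × (Fin (2 ^ (m + 1)) → G) :=
  (tmerge k.1 k'.1, tmerge k.2 k'.2)

lemma tmerge_lo {m : ℕ} (y z : Fin (2 ^ m) → G) (j : Fin (2 ^ (m + 1))) (h : (j : ℕ) < 2 ^ m) :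
    tmerge y z j = y ⟨j, h⟩ := by
  simp only [tmerge, h, dif_pos]

lemma tmerge_hi {m : ℕ} (y z : Fin (2 ^ m) → G) (j : Fin (2 ^ (m + 1)))
    (h : ¬ ((j : ℕ) < 2 ^ m)) :
    tmerge y z j = z ⟨(j : ℕ) - 2 ^ m, by have := j.2; have := two_pow_succ m; omega⟩ := by
  simp only [tmerge, h, dif_neg, not_false_iff]

lemma split1_sAct {m : ℕ} (k k' : (Fin (2 ^ m) → G) × (Fin (2 ^ m) → G))
    (x : Fin (2 ^ (m + 1)) → G) :
    split1 (sAct (kmerge k k') x) = sAct k (split1 x) := by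
  funext i
  simp only [split1, sAct, kmerge]
  rw [tmerge_lo _ _ _ (by simpa using i.2), tmerge_lo _ _ _ (by simpa using i.2)]

lemma split2_sAct {m : ℕ} (k k' : (Fin (2 ^ m) → G) × (Fin (2 ^ m) → G))
    (x : Fin (2 ^ (m + 1)) → G) :
    split2 (sAct (kmerge k k') x) = sAct k' (split2 x) := by
  funext i
  have h : ¬ ((2 ^ m + i.1) < 2 ^ m) := by omega
  simp only [split2, sAct, kmerge]
  rw [tmerge_hi _ _ _ (by simpa using h), tmerge_hi _ _ _ (by simpa using h)]
  simp

/-- the iterated projection -/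
def proj : (m : ℕ) → (Fin (2 ^ m) → G) → G
  | 0 => fun x => x 0
  | m + 1 => fun x => (proj m (split1 x))⁻¹ * proj m (split2 x)

/-- the basic section -/
def sect : (m : ℕ) → G → (Fin (2 ^ m) → G)
  | 0 => fun a _ => a
  | m + 1 => fun a => tmerge (sect m 1) (sect m a)

lemma proj_sect (m : ℕ) (a : G) : proj m (sect m a) = a := by
  induction m generalizing a with
  | zero => rfl
  | succ m ih =>
    show (proj m (split1 (tmerge (sect m 1) (sect m a))))⁻¹
      * proj m (split2 (tmerge (sect m 1) (sect m a))) = a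
    rw [split1_tmerge, split2_tmerge, ih, ih, inv_one, one_mul]

lemma continuous_split1 [TopologicalSpace G] {m : ℕ} : Continuous (split1 (G := G) (m := m)) :=
  continuous_pi fun i => continuous_apply _

lemma continuous_split2 [TopologicalSpace G] {m : ℕ} : Continuous (split2 (G := G) (m := m)) :=
  continuous_pi fun i => continuous_apply _

lemma continuous_proj [TopologicalSpace G] [IsTopologicalGroup G] (m : ℕ) :
    Continuous (proj (G := G) m) := by
  induction m with
  | zero => exact continuous_apply _
  | succ m ih =>
    exact ((ih.comp continuous_split1).inv).mul (ih.comp continuous_split2)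

lemma continuous_sect [TopologicalSpace G] (m : ℕ) : Continuous (sect (G := G) m) := by
  induction m with
  | zero => exact continuous_pi fun _ => continuous_id
  | succ m ih =>
    refine continuous_pi fun j => ?_
    show Continuous fun a => tmerge (sect m 1) (sect m a) j
    by_cases h : (j : ℕ) < 2 ^ m
    · simp only [tmerge, h, dif_pos]; exact continuous_const
    · simp only [tmerge, h, dif_neg, not_false_iff]
      exact (continuous_apply _).comp ih

lemma dist_proj_le (m : ℕ) (x y : Fin (2 ^ m) → G) :
    dist (proj m x) (proj m y) ≤ towerDist m x y := by
  induction m with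
  | zero => rw [towerDist_zero]; exact le_of_eq rfl
  | succ m ih =>
    rw [towerDist_succ]
    have h1 : dist (proj (m + 1) x) (proj (m + 1) y)
        ≤ dist (proj m (split1 x)) (proj m (split1 y))
          + dist (proj m (split2 x)) (proj m (split2 y)) := by
      show dist ((proj m (split1 x))⁻¹ * proj m (split2 x))
        ((proj m (split1 y))⁻¹ * proj m (split2 y)) ≤ _
      refine (dist_triangle _ ((proj m (split1 y))⁻¹ * proj m (split2 x)) _).trans_eq ?_
      rw [dist_mul_right, dist_inv_inv, dist_mul_left]
    have h2 := add_le_add (ih (split1 x) (split1 y)) (ih (split2 x) (split2 y))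
    exact (h1.trans h2).trans
      (add_le_sqrt_two (towerDist_nonneg _ _) (towerDist_nonneg _ _))

/-- the stabilizer subgroup -/
def stab (m : ℕ) : Subgroup ((Fin (2 ^ m) → G) × (Fin (2 ^ m) → G)) where
  carrier := {k | ∀ x, proj m (sAct k x) = proj m x}
  one_mem' := fun x => by rw [sAct_one]
  mul_mem' := by
    intro k k' hk hk' x
    rw [sAct_mul, hk, hk']
  inv_mem' := by
    intro k hk x
    have := hk (sAct k⁻¹ x)
    rw [← sAct_mul, mul_inv_cancel, sAct_one] at this
    exact this.symm


lemma continuous_tmerge [TopologicalSpace G] {m : ℕ} :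
    Continuous (fun yz : (Fin (2 ^ m) → G) × (Fin (2 ^ m) → G) => tmerge yz.1 yz.2) := by
  refine continuous_pi fun j => ?_
  by_cases h : (j : ℕ) < 2 ^ m
  · simp only [tmerge, h, dif_pos]
    exact (continuous_apply _).comp continuous_fst
  · simp only [tmerge, h, dif_neg, not_false_iff]
    exact (continuous_apply _).comp continuous_snd

/-- exact attainment of the quotient distance -/
lemma att (hmid : ∀ x y : G, ∃ z : G, dist x z = dist x y / 2 ∧ dist z y = dist x y / 2) :
    ∀ (m : ℕ) (g g' : G) (x y : Fin (2 ^ m) → G),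
      ∃ k : (Fin (2 ^ m) → G) × (Fin (2 ^ m) → G),
        (∀ w, proj m (sAct k w) = g * proj m w * g') ∧
        towerDist m x (sAct k y) = dist (proj m x) (g * proj m y * g') := by
  intro m
  induction m with
  | zero =>
    intro g g' x y
    refine ⟨(fun _ => g, fun _ => g'⁻¹), fun w => by simp [proj, sAct], ?_⟩
    rw [towerDist_zero]
    show dist (x 0) (g * y 0 * g'⁻¹⁻¹) = _
    rw [inv_inv]
    rfl
  | succ m ih =>
    intro g g' x y
    set A₁ := proj m (split1 x) with hA₁
    set A₂ := proj m (split2 x) with hA₂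
    set B₁ := proj m (split1 y) with hB₁
    set B₂ := proj m (split2 y) with hB₂
    set b' := g * proj (m + 1) y * g' with hb'
    obtain ⟨z, hz1, hz2⟩ := hmid (proj (m + 1) x) b'
    set h := A₁ * z * g'⁻¹ * B₂⁻¹ with hh
    obtain ⟨k₁, hk₁p, hk₁d⟩ := ih h g⁻¹ (split1 x) (split1 y)
    obtain ⟨k₂, hk₂p, hk₂d⟩ := ih h g' (split2 x) (split2 y)
    refine ⟨kmerge k₁ k₂, fun w => ?_, ?_⟩
    · show (proj m (split1 (sAct (kmerge k₁ k₂) w)))⁻¹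
        * proj m (split2 (sAct (kmerge k₁ k₂) w)) = g * proj (m + 1) w * g'
      rw [split1_sAct, split2_sAct, hk₁p, hk₂p]
      show _ = g * ((proj m (split1 w))⁻¹ * proj m (split2 w)) * g'
      group
    · rw [towerDist_succ, split1_sAct, split2_sAct, hk₁d, hk₂d]
      have hax : proj (m + 1) x = A₁⁻¹ * A₂ := rfl
      have hay : proj (m + 1) y = B₁⁻¹ * B₂ := rfl
      have e2 : h * B₂ * g' = A₁ * z := by rw [hh]; group
      have hT2 : dist A₂ (h * B₂ * g') = dist (proj (m + 1) x) z := by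
        rw [e2, hax]
        have h6 := dist_mul_left A₁ (A₁⁻¹ * A₂) z
        rw [show A₁ * (A₁⁻¹ * A₂) = A₂ by group] at h6
        exact h6
      have e1 : h * B₁ * g⁻¹ = A₁ * (z * b'⁻¹) := by rw [hh, hb', hay]; group
      have hT1 : dist A₁ (h * B₁ * g⁻¹) = dist b' z := by
        rw [e1]
        have h5 := dist_mul_left A₁ 1 (z * b'⁻¹)
        rw [mul_one] at h5
        rw [h5, ← dist_mul_right 1 (z * b'⁻¹) b', one_mul, inv_mul_cancel_right]
      rw [hT1, hT2, hz1, dist_comm b' z, hz2]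
      exact sqrt_two_helper_eq dist_nonneg

variable [CompactSpace G] [MeasurableSpace G] [BorelSpace G]

open Classical in
/-- pick the first element of the list whose set contains the point -/
noncomputable def pickF {α β : Type*} (U : β → Set α) (dflt : β) : List β → α → β
  | [] => fun _ => dflt
  | z :: l => fun w => if w ∈ U z then z else pickF U dflt l w

lemma pickF_measurable {α β : Type*} [MeasurableSpace α] [MeasurableSpace β]
    {U : β → Set α} (hU : ∀ z, MeasurableSet (U z)) (dflt : β) (l : List β) :
    Measurable (pickF U dflt l) := by
  induction l with
  | nil => exact measurable_const
  | cons z l ih =>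
    classical
    show Measurable fun w => if w ∈ U z then z else pickF U dflt l w
    exact Measurable.ite (hU z) measurable_const ih

lemma pickF_mem {α β : Type*} {U : β → Set α} {dflt : β} {l : List β} {w : α}
    (h : ∃ z ∈ l, w ∈ U z) : w ∈ U (pickF U dflt l w) := by
  induction l with
  | nil => simp at h
  | cons z l ih =>
    classical
    show w ∈ U (if w ∈ U z then z else pickF U dflt l w)
    split_ifs with hw
    · exact hw
    · refine ih ?_
      obtain ⟨z', hz', hwz'⟩ := h
      rcases List.mem_cons.1 hz' with rfl | hz''
      · exact absurd hwz' hw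
      · exact ⟨z', hz'', hwz'⟩

/-- measurable approximate midpoint selection -/
lemma zeta (hmid : ∀ x y : G, ∃ z : G, dist x z = dist x y / 2 ∧ dist z y = dist x y / 2)
    {ε : ℝ} (hε : 0 < ε) :
    ∃ ζ : G × G → G, Measurable ζ ∧
      ∀ a b : G, dist a (ζ (a, b)) ≤ dist a b / 2 + ε ∧ dist (ζ (a, b)) b ≤ dist a b / 2 + ε := by
  classical
  set U : G → Set (G × G) :=
    fun z => {w | dist w.1 z < dist w.1 w.2 / 2 + ε ∧ dist z w.2 < dist w.1 w.2 / 2 + ε} with hU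
  have hUopen : ∀ z, IsOpen (U z) := by
    intro z
    refine IsOpen.and ?_ ?_
    · exact isOpen_lt (continuous_fst.dist continuous_const)
        (((continuous_fst.dist continuous_snd).div_const 2).add continuous_const)
    · exact isOpen_lt (continuous_const.dist continuous_snd)
        (((continuous_fst.dist continuous_snd).div_const 2).add continuous_const)
  have hcov : (Set.univ : Set (G × G)) ⊆ ⋃ z, U z := by
    intro w _
    obtain ⟨z, hz1, hz2⟩ := hmid w.1 w.2
    exact Set.mem_iUnion.2 ⟨z, by constructor <;> simp only [hz1, hz2] <;> linarith⟩
  obtain ⟨t, ht⟩ := isCompact_univ.elim_finite_subcover U hUopen hcov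
  refine ⟨pickF U 1 t.toList, pickF_measurable (fun z => (hUopen z).measurableSet) 1 _, ?_⟩
  intro a b
  have hw : ((a, b) : G × G) ∈ ⋃ z ∈ t, U z := ht (Set.mem_univ _)
  obtain ⟨z, hzt, hwz⟩ := Set.mem_iUnion₂.1 hw
  have : ((a, b) : G × G) ∈ U (pickF U 1 t.toList (a, b)) :=
    pickF_mem ⟨z, Finset.mem_toList.2 hzt, hwz⟩
  exact ⟨this.1.le, this.2.le⟩

/-- the measurable approximate optimal transport elements -/
lemma tau (hmid : ∀ x y : G, ∃ z : G, dist x z = dist x y / 2 ∧ dist z y = dist x y / 2) :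
    ∀ (m : ℕ) {ε : ℝ}, 0 < ε →
      ∃ τ : G × G × G × G → (Fin (2 ^ m) → G) × (Fin (2 ^ m) → G),
        Measurable τ ∧ ∀ g g' a b : G,
          (∀ w, proj m (sAct (τ (g, g', a, b)) w) = g * proj m w * g') ∧
          towerDist m (sect m a) (sAct (τ (g, g', a, b)) (sect m b))
            ≤ dist a (g * b * g') + ε := by
  intro m
  induction m with
  | zero =>
    intro ε hε
    refine ⟨fun q => (fun _ => q.1, fun _ => q.2.1⁻¹), ?_, ?_⟩
    · refine Measurable.prodMk ?_ ?_
      · exact measurable_pi_lambda _ fun _ => measurable_fst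
      · exact measurable_pi_lambda _ fun _ => (measurable_fst.comp measurable_snd).inv
    · intro g g' a b
      refine ⟨fun w => by simp [proj, sAct], ?_⟩
      rw [towerDist_zero]
      show dist a (g * b * g'⁻¹⁻¹) ≤ _
      rw [inv_inv]
      exact le_add_of_nonneg_right hε.le
  | succ m ih =>
    intro ε hε
    have hε4 : 0 < ε / 4 := by linarith
    obtain ⟨τ', hτ'meas, hτ'⟩ := ih hε4
    obtain ⟨ζ, hζmeas, hζ⟩ := zeta hmid hε4
    refine ⟨fun q => kmerge
      (τ' (ζ (q.2.2.1, q.1 * q.2.2.2 * q.2.1) * q.2.1⁻¹ * q.2.2.2⁻¹, q.1⁻¹, 1, 1))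
      (τ' (ζ (q.2.2.1, q.1 * q.2.2.2 * q.2.1) * q.2.1⁻¹ * q.2.2.2⁻¹, q.2.1, q.2.2.1, q.2.2.2)),
      ?_, ?_⟩
    · have hzmeas : Measurable fun q : G × G × G × G =>
          ζ (q.2.2.1, q.1 * q.2.2.2 * q.2.1) * q.2.1⁻¹ * q.2.2.2⁻¹ := by
        have h1 : Measurable fun q : G × G × G × G => q.2.2.1 := by fun_prop
        have h2 : Measurable fun q : G × G × G × G => q.1 * q.2.2.2 * q.2.1 := by fun_prop
        have h3 : Measurable fun q : G × G × G × G => q.2.1⁻¹ := by fun_prop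
        have h4 : Measurable fun q : G × G × G × G => q.2.2.2⁻¹ := by fun_prop
        exact ((hζmeas.comp (h1.prodMk h2)).mul h3).mul h4
      have hFmeas : Measurable fun q : G × G × G × G =>
          ((ζ (q.2.2.1, q.1 * q.2.2.2 * q.2.1) * q.2.1⁻¹ * q.2.2.2⁻¹ : G),
            (q.1⁻¹ : G), (1 : G), (1 : G)) := by
        refine hzmeas.prodMk (Measurable.prodMk (by fun_prop)
          (Measurable.prodMk measurable_const measurable_const))
      have hF'meas : Measurable fun q : G × G × G × G =>
          ((ζ (q.2.2.1, q.1 * q.2.2.2 * q.2.1) * q.2.1⁻¹ * q.2.2.2⁻¹ : G),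
            (q.2.1 : G), (q.2.2.1 : G), (q.2.2.2 : G)) := by
        refine hzmeas.prodMk (Measurable.prodMk (by fun_prop)
          (Measurable.prodMk (by fun_prop) (by fun_prop)))
      have hk1 : Measurable fun q : G × G × G × G =>
          τ' (ζ (q.2.2.1, q.1 * q.2.2.2 * q.2.1) * q.2.1⁻¹ * q.2.2.2⁻¹, q.1⁻¹, 1, 1) :=
        hτ'meas.comp hFmeas
      have hk2 : Measurable fun q : G × G × G × G =>
          τ' (ζ (q.2.2.1, q.1 * q.2.2.2 * q.2.1) * q.2.1⁻¹ * q.2.2.2⁻¹,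
            q.2.1, q.2.2.1, q.2.2.2) :=
        hτ'meas.comp hF'meas
      exact (continuous_tmerge.measurable.comp (hk1.fst.prodMk hk2.fst)).prodMk
        (continuous_tmerge.measurable.comp (hk1.snd.prodMk hk2.snd))
    · intro g g' a b
      show (∀ w, proj (m + 1) (sAct (kmerge
          (τ' (ζ (a, g * b * g') * g'⁻¹ * b⁻¹, g⁻¹, 1, 1))
          (τ' (ζ (a, g * b * g') * g'⁻¹ * b⁻¹, g', a, b))) w) = g * proj (m + 1) w * g') ∧
        towerDist (m + 1) (sect (m + 1) a) (sAct (kmerge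
          (τ' (ζ (a, g * b * g') * g'⁻¹ * b⁻¹, g⁻¹, 1, 1))
          (τ' (ζ (a, g * b * g') * g'⁻¹ * b⁻¹, g', a, b))) (sect (m + 1) b))
          ≤ dist a (g * b * g') + ε
      obtain ⟨hz1, hz2⟩ := hζ a (g * b * g')
      set z := ζ (a, g * b * g') with hzdef
      set h := z * g'⁻¹ * b⁻¹ with hhdef
      obtain ⟨hp₁, hd₁⟩ := hτ' h g⁻¹ 1 1
      obtain ⟨hp₂, hd₂⟩ := hτ' h g' a b
      constructor
      · intro w
        show (proj m (split1 (sAct (kmerge _ _) w)))⁻¹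
          * proj m (split2 (sAct (kmerge _ _) w)) = g * proj (m + 1) w * g'
        rw [split1_sAct, split2_sAct, hp₁, hp₂]
        show _ = g * ((proj m (split1 w))⁻¹ * proj m (split2 w)) * g'
        group
      · show towerDist (m + 1) (tmerge (sect m 1) (sect m a))
          (sAct (kmerge (τ' (h, g⁻¹, 1, 1)) (τ' (h, g', a, b))) (tmerge (sect m 1) (sect m b)))
          ≤ dist a (g * b * g') + ε
        rw [towerDist_succ, split1_sAct, split2_sAct, split1_tmerge, split1_tmerge,
          split2_tmerge, split2_tmerge]
        have hT1 : towerDist m (sect m 1) (sAct (τ' (h, g⁻¹, 1, 1)) (sect m 1))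
            ≤ dist a (g * b * g') / 2 + ε / 4 + ε / 4 := by
          refine (hd₁).trans ?_
          have e1 : h * 1 * g⁻¹ = z * (g * b * g')⁻¹ := by rw [hhdef]; group
          rw [e1, ← dist_mul_right 1 (z * (g * b * g')⁻¹) (g * b * g'), one_mul,
            inv_mul_cancel_right, dist_comm]
          linarith
        have hT2 : towerDist m (sect m a) (sAct (τ' (h, g', a, b)) (sect m b))
            ≤ dist a (g * b * g') / 2 + ε / 4 + ε / 4 := by
          refine (hd₂).trans ?_
          have e2 : h * b * g' = z := by rw [hhdef]; group
          rw [e2]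
          linarith
        have hkey := sqrt_two_helper_le (towerDist_nonneg _ _) (towerDist_nonneg _ _) hT1 hT2
        refine hkey.trans ?_
        have hdn : 0 ≤ dist a (g * b * g') := dist_nonneg
        linarith


lemma towerCost_sAct {m : ℕ} (k : (Fin (2 ^ m) → G) × (Fin (2 ^ m) → G))
    (x y : Fin (2 ^ m) → G) : towerCost m (sAct k x, sAct k y) = towerCost m (x, y) := by
  rw [towerCost_eq, towerCost_eq, towerDist_sAct]

lemma measurable_towerCost (m : ℕ) : Measurable (towerCost (G := G) m) := by
  refine Measurable.const_mul ?_ _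
  refine Finset.measurable_sum _ fun i _ => ?_
  exact (Measurable.edist ((measurable_pi_apply i).comp measurable_fst)
    ((measurable_pi_apply i).comp measurable_snd)).pow_const 2

lemma isClosed_stab (m : ℕ) :
    IsClosed ((stab (G := G) m : Set ((Fin (2 ^ m) → G) × (Fin (2 ^ m) → G)))) := by
  have he : ((stab (G := G) m : Set ((Fin (2 ^ m) → G) × (Fin (2 ^ m) → G))))
      = ⋂ x : Fin (2 ^ m) → G, {k | proj m (sAct k x) = proj m x} := by
    ext k
    simp only [Set.mem_iInter, Set.mem_setOf_eq]
    exact ⟨fun h x => h x, fun h => h⟩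
  rw [he]
  refine isClosed_iInter fun x => isClosed_eq ?_ continuous_const
  exact (continuous_proj m).comp (continuous_sAct.comp (continuous_id.prodMk continuous_const))

/-- the lifting map and its properties -/
lemma lifting (hmid : ∀ x y : G, ∃ z : G, dist x z = dist x y / 2 ∧ dist z y = dist x y / 2)
    (m : ℕ) :
    ∃ L : Measure G → Measure (Fin (2 ^ m) → G),
      (∀ mu : Measure G, IsProbabilityMeasure mu → (L mu).map (proj m) = mu) ∧
      (∀ mu nu : Measure G, IsProbabilityMeasure mu → IsProbabilityMeasure nu →
        WassCost (towerCost m) (L mu) (L nu)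
          = WassCost (fun q => edist q.1 q.2 ^ 2) mu nu) := by
  classical
  haveI hcs : CompactSpace ↥(stab (G := G) m) :=
    isCompact_iff_compactSpace.mp ((isClosed_stab m).isCompact)
  haveI : Nonempty ↥(stab (G := G) m) := ⟨1⟩
  haveI : BorelSpace ↥(stab (G := G) m) :=
    Subtype.borelSpace (stab (G := G) m : Set ((Fin (2 ^ m) → G) × (Fin (2 ^ m) → G)))
  set S := stab (G := G) m with hSdef
  set ν₀ : Measure ↥S := Measure.haarMeasure ⊤ with hν₀
  set μS : Measure ↥S := ν₀.map (fun s => s⁻¹) with hμS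
  haveI hprob : IsProbabilityMeasure μS := by
    constructor
    rw [hμS, Measure.map_apply measurable_inv MeasurableSet.univ, Set.preimage_univ, hν₀,
      ← TopologicalSpace.PositiveCompacts.coe_top (α := ↥S)]
    exact Measure.haarMeasure_self
  have hrinv : ∀ t : ↥S, μS.map (· * t) = μS := by
    intro t
    rw [hμS, Measure.map_map (measurable_mul_const t) measurable_inv]
    have he : ((· * t) ∘ (fun s : ↥S => s⁻¹)) = (fun s : ↥S => s⁻¹) ∘ ((t⁻¹ * ·)) := by
      funext s
      simp [mul_inv_rev]
    rw [he, ← Measure.map_map measurable_inv (measurable_const_mul _),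
      MeasureTheory.map_mul_left_eq_self ν₀ (t⁻¹)]
  set Φ : ↥S × G → (Fin (2 ^ m) → G) := fun sa => sAct sa.1.1 (sect m sa.2) with hΦdef
  have hΦmeas : Measurable Φ := by
    have h0 : Φ = (fun p : ((Fin (2 ^ m) → G) × (Fin (2 ^ m) → G)) × (Fin (2 ^ m) → G) =>
        sAct p.1 p.2) ∘ (fun sa : ↥S × G => ((sa.1.1 : _), sect m sa.2)) := rfl
    rw [h0]
    exact (continuous_sAct (G := G) (n := 2 ^ m)).measurable.comp
      ((measurable_subtype_coe.comp measurable_fst).prodMk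
        ((continuous_sect m).measurable.comp measurable_snd))
  have hmarg : ∀ mu : Measure G, IsProbabilityMeasure mu →
      ((μS.prod mu).map Φ).map (proj m) = mu := by
    intro mu hmu
    haveI := hmu
    rw [Measure.map_map (continuous_proj m).measurable hΦmeas]
    have he : (proj m ∘ Φ) = Prod.snd := by
      funext sa
      show proj m (sAct sa.1.1 (sect m sa.2)) = sa.2
      have hs : ∀ x, proj m (sAct sa.1.1 x) = proj m x := sa.1.2
      rw [hs (sect m sa.2), proj_sect]
    rw [he, Measure.map_snd_prod, measure_univ, one_smul]
  refine ⟨fun mu => (μS.prod mu).map Φ, hmarg, ?_⟩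
  intro mu nu hmu hnu
  haveI := hmu
  haveI := hnu
  obtain ⟨C, hCb⟩ := Metric.isBounded_iff.mp (isCompact_univ (X := G)).isBounded
  have hC' : ∀ x y : G, dist x y ≤ C := fun x y => hCb trivial trivial
  have hC0 : 0 ≤ C := le_trans dist_nonneg (hC' 1 1)
  refine le_antisymm ?_ ?_
  · -- WassCost towerCost ≤ WassCost edist²
    refine le_iInf₂ fun q hq => ?_
    haveI hqprob : IsProbabilityMeasure q := by
      constructor
      have h1 : q.map Prod.fst Set.univ = 1 := by rw [hq.1, measure_univ]
      rwa [Measure.map_apply measurable_fst MeasurableSet.univ, Set.preimage_univ] at h1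
    refine ENNReal.le_of_forall_pos_le_add fun ε' hε' _ => ?_
    set εR : ℝ := min 1 ((ε' : ℝ) / (2 * C + 1)) with hεRdef
    have h2C : (0 : ℝ) < 2 * C + 1 := by linarith
    have hεR : 0 < εR := lt_min one_pos (div_pos (by exact_mod_cast hε') h2C)
    obtain ⟨τ, hτmeas, hτ⟩ := tau hmid m hεR
    set t : G × G → (Fin (2 ^ m) → G) × (Fin (2 ^ m) → G) :=
      fun ab => τ (1, 1, ab.1, ab.2) with htdef
    have htmem : ∀ ab : G × G, t ab ∈ S := by
      intro ab
      intro w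
      have h2 := (hτ 1 1 ab.1 ab.2).1 w
      rwa [one_mul, mul_one] at h2
    have htmeas : Measurable t := hτmeas.comp (measurable_const.prodMk
      (measurable_const.prodMk (measurable_fst.prodMk measurable_snd)))
    set tS : G × G → ↥S := fun ab => ⟨t ab, htmem ab⟩ with htSdef
    have htSmeas : Measurable tS := htmeas.subtype_mk
    set Ψ : ↥S × (G × G) → (Fin (2 ^ m) → G) × (Fin (2 ^ m) → G) :=
      fun sw => (sAct sw.1.1 (sect m sw.2.1), sAct (sw.1.1 * t sw.2) (sect m sw.2.2)) with hΨdef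
    have hΨmeas : Measurable Ψ := by
      refine Measurable.prodMk ?_ ?_
      · exact (continuous_sAct (G := G) (n := 2 ^ m)).measurable.comp
          ((measurable_subtype_coe.comp measurable_fst).prodMk
            ((continuous_sect m).measurable.comp (measurable_fst.comp measurable_snd)))
      · refine (continuous_sAct (G := G) (n := 2 ^ m)).measurable.comp (Measurable.prodMk ?_
          ((continuous_sect m).measurable.comp (measurable_snd.comp measurable_snd)))
        exact (measurable_subtype_coe.comp measurable_fst).mul (htmeas.comp measurable_snd)
    set Q := (μS.prod q).map Ψ with hQdef
    have key : ∀ f : G × G → G, Measurable f →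
        (μS.prod q).map (fun sw : ↥S × (G × G) => Φ (sw.1, f sw.2))
          = (μS.prod (q.map f)).map Φ := by
      intro f hf
      have h1 : (fun sw : ↥S × (G × G) => Φ (sw.1, f sw.2)) = Φ ∘ (Prod.map id f) := rfl
      rw [h1, ← Measure.map_map hΦmeas (measurable_id.prodMap hf),
        ← Measure.map_prod_map _ _ measurable_id hf, Measure.map_id]
    have hQfst : Q.map Prod.fst = (μS.prod mu).map Φ := by
      rw [hQdef, Measure.map_map measurable_fst hΨmeas]
      have h1 : (Prod.fst ∘ Ψ) = fun sw : ↥S × (G × G) => Φ (sw.1, sw.2.1) := rfl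
      rw [h1, key Prod.fst measurable_fst, hq.1]
    set Ξ : ↥S × (G × G) → ↥S × (G × G) := fun sw => (sw.1 * tS sw.2, sw.2) with hΞdef
    have hΞmeas : Measurable Ξ :=
      (measurable_fst.mul (htSmeas.comp measurable_snd)).prodMk measurable_snd
    have hΞinv : (μS.prod q).map Ξ = μS.prod q := by
      refine (Measure.prod_eq fun s e hs he' => ?_).symm
      rw [Measure.map_apply hΞmeas (hs.prod he'),
        Measure.prod_apply_symm (hΞmeas (hs.prod he'))]
      have hsl : ∀ w : G × G, μS ((fun σ : ↥S => (σ, w)) ⁻¹' (Ξ ⁻¹' (s ×ˢ e)))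
          = Set.indicator e (fun _ => μS s) w := by
        intro w
        by_cases hw : w ∈ e
        · have hset : ((fun σ : ↥S => (σ, w)) ⁻¹' (Ξ ⁻¹' (s ×ˢ e)))
              = (fun σ : ↥S => σ * tS w) ⁻¹' s := by
            ext σ
            simp [hΞdef, Set.mem_prod, hw]
          rw [hset, Set.indicator_of_mem hw]
          conv_rhs => rw [← hrinv (tS w)]
          rw [Measure.map_apply (measurable_mul_const _) hs]
        · have hset : ((fun σ : ↥S => (σ, w)) ⁻¹' (Ξ ⁻¹' (s ×ˢ e))) = ∅ := by
            ext σ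
            simp [hΞdef, Set.mem_prod, hw]
          rw [hset, Set.indicator_of_notMem hw]
          simp
      rw [lintegral_congr hsl, lintegral_indicator he', setLIntegral_const, mul_comm]
    have hQsnd : Q.map Prod.snd = (μS.prod nu).map Φ := by
      rw [hQdef, Measure.map_map measurable_snd hΨmeas]
      have h1 : (Prod.snd ∘ Ψ) = (fun sw : ↥S × (G × G) => Φ (sw.1, sw.2.2)) ∘ Ξ := rfl
      rw [h1, ← Measure.map_map (show Measurable fun sw : ↥S × (G × G) => Φ (sw.1, sw.2.2) from
        hΦmeas.comp (measurable_fst.prodMk measurable_snd.snd)) hΞmeas, hΞinv,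
        key Prod.snd measurable_snd, hq.2]
    refine le_trans (iInf₂_le Q ⟨hQfst, hQsnd⟩) ?_
    have hcost : ∫⁻ p, towerCost m p ∂Q
        ≤ (∫⁻ p, edist p.1 p.2 ^ 2 ∂q) + ENNReal.ofReal (εR * (2 * C + εR)) := by
      rw [hQdef, lintegral_map (measurable_towerCost m) hΨmeas]
      have hpt : ∀ sw : ↥S × (G × G), towerCost m (Ψ sw)
          ≤ edist sw.2.1 sw.2.2 ^ 2 + ENNReal.ofReal (εR * (2 * C + εR)) := by
        intro sw
        show towerCost m (sAct sw.1.1 (sect m sw.2.1), sAct (sw.1.1 * t sw.2) (sect m sw.2.2)) ≤ _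
        rw [sAct_mul, towerCost_sAct, towerCost_eq]
        have h1 : towerDist m (sect m sw.2.1) (sAct (t sw.2) (sect m sw.2.2))
            ≤ dist sw.2.1 sw.2.2 + εR := by
          have h2 := (hτ 1 1 sw.2.1 sw.2.2).2
          rwa [one_mul, mul_one] at h2
        have h2 := pow_le_pow_left₀ (towerDist_nonneg _ _) h1 2
        refine (ENNReal.ofReal_le_ofReal h2).trans ?_
        have h3 : (dist sw.2.1 sw.2.2 + εR) ^ 2
            ≤ dist sw.2.1 sw.2.2 ^ 2 + εR * (2 * C + εR) := by
          have h4 := hC' sw.2.1 sw.2.2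
          nlinarith [dist_nonneg (x := sw.2.1) (y := sw.2.2)]
        refine (ENNReal.ofReal_le_ofReal h3).trans ?_
        rw [ENNReal.ofReal_add (by positivity) (by positivity)]
        refine add_le_add_left (le_of_eq ?_) _
        rw [edist_dist, ← ENNReal.ofReal_pow dist_nonneg]
      refine (lintegral_mono hpt).trans ?_
      have hFmeas : Measurable fun w : G × G =>
          edist w.1 w.2 ^ 2 + ENNReal.ofReal (εR * (2 * C + εR)) :=
        ((measurable_fst.edist measurable_snd).pow_const 2).add_const _
      have h5 : ∫⁻ sw : ↥S × (G × G),
          (edist sw.2.1 sw.2.2 ^ 2 + ENNReal.ofReal (εR * (2 * C + εR))) ∂(μS.prod q)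
          = ∫⁻ w, (edist w.1 w.2 ^ 2 + ENNReal.ofReal (εR * (2 * C + εR)))
            ∂((μS.prod q).map Prod.snd) := (lintegral_map hFmeas measurable_snd).symm
      rw [h5, Measure.map_snd_prod, measure_univ, one_smul,
        lintegral_add_right _ measurable_const, lintegral_const, measure_univ, mul_one]
    refine hcost.trans (add_le_add_right ?_ _)
    have hεR1 : εR ≤ 1 := min_le_left _ _
    have hεR2 : εR ≤ (ε' : ℝ) / (2 * C + 1) := min_le_right _ _
    have h6 : εR * (2 * C + εR) ≤ (ε' : ℝ) := by
      have h4 : εR * (2 * C + εR) ≤ εR * (2 * C + 1) := by nlinarith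
      have h5 : εR * (2 * C + 1) ≤ ((ε' : ℝ) / (2 * C + 1)) * (2 * C + 1) := by nlinarith
      rw [div_mul_cancel₀] at h5
      · linarith
      · linarith
    calc ENNReal.ofReal (εR * (2 * C + εR)) ≤ ENNReal.ofReal (ε' : ℝ) :=
        ENNReal.ofReal_le_ofReal h6
    _ = (ε' : ℝ≥0∞) := ENNReal.ofReal_coe_nnreal
  · -- WassCost edist² ≤ WassCost towerCost
    refine le_iInf₂ fun Q hQ => ?_
    have hp : Measurable (proj (G := G) m) := (continuous_proj m).measurable
    have hq'c : IsCoupling (Q.map (Prod.map (proj m) (proj m))) mu nu := by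
      constructor
      · rw [Measure.map_map measurable_fst (hp.prodMap hp)]
        have h1 : (Prod.fst ∘ Prod.map (proj m) (proj m))
            = proj m ∘ (Prod.fst : (Fin (2 ^ m) → G) × (Fin (2 ^ m) → G) → Fin (2 ^ m) → G) := rfl
        rw [h1, ← Measure.map_map hp measurable_fst, hQ.1, hmarg mu hmu]
      · rw [Measure.map_map measurable_snd (hp.prodMap hp)]
        have h1 : (Prod.snd ∘ Prod.map (proj m) (proj m))
            = proj m ∘ (Prod.snd : (Fin (2 ^ m) → G) × (Fin (2 ^ m) → G) → Fin (2 ^ m) → G) := rfl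
        rw [h1, ← Measure.map_map hp measurable_snd, hQ.2, hmarg nu hnu]
    refine le_trans (iInf₂_le (Q.map (Prod.map (proj m) (proj m))) hq'c) ?_
    rw [lintegral_map ((measurable_fst.edist measurable_snd).pow_const 2) (hp.prodMap hp)]
    refine lintegral_mono fun p => ?_
    show edist (proj m p.1) (proj m p.2) ^ 2 ≤ towerCost m p
    rw [show towerCost m p = ENNReal.ofReal ((towerDist m p.1 p.2) ^ 2) from
      towerCost_eq p.1 p.2, edist_dist, ← ENNReal.ofReal_pow dist_nonneg]
    exact ENNReal.ofReal_le_ofReal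
      (pow_le_pow_left₀ dist_nonneg (dist_proj_le m p.1 p.2) 2)

end Aux

/-- let `G` be a compact connected (Lie) group with a bi-invariant
(Riemannian, encoded by the midpoint property) metric.  Iterating the isometry
`(√2·G × √2·G)/G ≅ G` `m` times identifies `G` isometrically with the quotient of
`(2^{m/2}·G)^{2^m}` by an isometric action of a compact group `H` of isometries, with
iterated quotient projection `p`; consequently there is a Wasserstein lifting
`ℒ = ℒ_m ∘ ⋯ ∘ ℒ₁ : 𝒫₂(G) → 𝒫₂((2^{m/2}·G)^{2^m})` which preserves the 2-Wasserstein
distance and satisfies `p_♯ ∘ ℒ = id` on `𝒫₂(G)`. -/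
theorem stmt19 {G : Type*} [Group G] [MetricSpace G] [CompactSpace G] [ConnectedSpace G]
    [IsIsometricSMul G G] [IsIsometricSMul Gᵐᵒᵖ G]
    [MeasurableSpace G] [BorelSpace G]
    (hmid : ∀ x y : G, ∃ z : G, dist x z = dist x y / 2 ∧ dist z y = dist x y / 2)
    (m : ℕ) :
    ∃ H : Set ((Fin (2 ^ m) → G) → (Fin (2 ^ m) → G)),
      -- `H` is a compact group of isometries of the scaled power
      id ∈ H ∧ (∀ φ ∈ H, ∀ ψ ∈ H, φ ∘ ψ ∈ H) ∧
      (∀ φ ∈ H, ∃ ψ ∈ H, φ ∘ ψ = id ∧ ψ ∘ φ = id) ∧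
      IsCompact H ∧
      (∀ φ ∈ H, ∀ x y : Fin (2 ^ m) → G, towerDist m (φ x) (φ y) = towerDist m x y) ∧
      -- the iterated projection realizes `G` as the metric quotient by `H`
      ∃ p : (Fin (2 ^ m) → G) → G, Function.Surjective p ∧ Measurable p ∧
        (∀ x y : Fin (2 ^ m) → G,
          dist (p x) (p y) = ⨅ φ : H, towerDist m x (φ.1 y)) ∧
        -- the composite Wasserstein lifting
        ∃ L : Measure G → Measure (Fin (2 ^ m) → G),
          (∀ mu : Measure G, IsProbabilityMeasure mu → (L mu).map p = mu) ∧
          (∀ mu nu : Measure G, IsProbabilityMeasure mu → IsProbabilityMeasure nu →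
            WassCost (towerCost m) (L mu) (L nu)
              = WassCost (fun q => edist q.1 q.2 ^ 2) mu nu) := by
  classical
  refine ⟨(fun k => sAct k) ''
    (stab (G := G) m : Set ((Fin (2 ^ m) → G) × (Fin (2 ^ m) → G))), ?_, ?_, ?_, ?_, ?_, ?_⟩
  · exact ⟨1, one_mem _, funext fun x => sAct_one x⟩
  · rintro φ ⟨k, hk, rfl⟩ ψ ⟨k', hk', rfl⟩
    exact ⟨k * k', mul_mem hk hk', funext fun x => sAct_mul k k' x⟩
  · rintro φ ⟨k, hk, rfl⟩
    refine ⟨sAct k⁻¹, ⟨k⁻¹, inv_mem hk, rfl⟩, ?_, ?_⟩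
    · funext x
      show sAct k (sAct k⁻¹ x) = x
      rw [← sAct_mul, mul_inv_cancel, sAct_one]
    · funext x
      show sAct k⁻¹ (sAct k x) = x
      rw [← sAct_mul, inv_mul_cancel, sAct_one]
  · refine ((isClosed_stab m).isCompact).image ?_
    refine continuous_pi fun x => ?_
    exact (continuous_sAct (G := G) (n := 2 ^ m)).comp (continuous_id.prodMk continuous_const)
  · rintro φ ⟨k, hk, rfl⟩ x y
    exact towerDist_sAct k x y
  · refine ⟨proj m, fun a => ⟨sect m a, proj_sect m a⟩, (continuous_proj m).measurable, ?_,
      lifting hmid m⟩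
    intro x y
    obtain ⟨k₀, hk₀p, hk₀d⟩ := att hmid m 1 1 x y
    have hk₀mem : k₀ ∈ stab (G := G) m := by
      intro w
      have h1 := hk₀p w
      rwa [one_mul, mul_one] at h1
    have hval : towerDist m x (sAct k₀ y) = dist (proj m x) (proj m y) := by
      rw [hk₀d, one_mul, mul_one]
    refine le_antisymm (le_ciInf ?_) ?_
    · rintro ⟨φ, k, hk, rfl⟩
      have h1 : proj m (sAct k y) = proj m y := hk y
      calc dist (proj m x) (proj m y) = dist (proj m x) (proj m (sAct k y)) := by rw [h1]
      _ ≤ towerDist m x (sAct k y) := dist_proj_le m _ _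
    · have hbdd : BddBelow (Set.range fun φ : ((fun k => sAct k) ''
          (stab (G := G) m : Set ((Fin (2 ^ m) → G) × (Fin (2 ^ m) → G)))) =>
          towerDist m x (φ.1 y)) := by
        refine ⟨0, ?_⟩
        rintro r ⟨φ, rfl⟩
        exact towerDist_nonneg _ _
      exact (ciInf_le hbdd (⟨sAct k₀, ⟨k₀, hk₀mem, rfl⟩⟩ : ((fun k => sAct k) ''
        (stab (G := G) m : Set ((Fin (2 ^ m) → G) × (Fin (2 ^ m) → G)))))).trans_eq hval
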